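/- For every finite set N of divisions, every assignment partition ((N_k, X_k))_{k=1}^K of N, every strict priority order ▷ on N, and every preference profile ≻, the assignment produced by the Two-Stage Serial Dictatorship (T-SD) mechanism is feasible under the assignment partition and efficient under the assignment partition. -/

import Mathlib

open scoped Classical

/-- Each division has a strict linear (total) preference order over workers. -/
def StrictProfile {α : Type*} (pref : α → α → α → Prop) : Prop :=
  ∀ i, IsStrictTotalOrder α (pref i)

/-- `pref'` is an improvement for division `i` with respect to `pref`. -/
def Improvement {α : Type*} (pref pref' : α → α → α → Prop) (i : α) : Prop :=
  pref' i = pref i ∧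
  (∀ j, j ≠ i → ∀ k, k ≠ i → pref j i k → pref' j i k) ∧
  (∀ j, j ≠ i → ∀ k, k ≠ i → ∀ l, l ≠ i → (pref j k l ↔ pref' j k l))

/-- The `r`-maximum element of the finite set `s` (chosen via Hilbert choice):
the element of `s` that `r`-beats every other element of `s`. -/
noncomputable def pick {α : Type*} [Nonempty α] (r : α → α → Prop) (s : Finset α) : α :=
  Classical.epsilon fun m => m ∈ s ∧ ∀ x ∈ s, x ≠ m → r m x

/-- `((Npart k, Xpart k))_k` is an assignment partition: `Npart` partitions the
divisions, `Xpart` partitions the workers (both identified with `α`), and for each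
group `k` we have separation (`Npart k ∩ Xpart k = ∅`) and balance
(`|Npart k| = |Xpart k|`). -/
def IsAPartition {α : Type*} {K : ℕ} (Npart Xpart : Fin K → Finset α) : Prop :=
  (∀ a : α, ∃! k, a ∈ Npart k) ∧
  (∀ a : α, ∃! k, a ∈ Xpart k) ∧
  (∀ k, ∀ a ∈ Npart k, a ∉ Xpart k) ∧
  (∀ k, (Npart k).card = (Xpart k).card)

/-- The choice set `X_{g(i)}` of division `i`: the worker set of `i`'s group. -/
noncomputable def choiceSet {α : Type*} [DecidableEq α] {K : ℕ}
    (Npart Xpart : Fin K → Finset α) (i : α) : Finset α :=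
  Finset.univ.biUnion fun k => if i ∈ Npart k then Xpart k else ∅

/-- An assignment is feasible under the assignment partition if `μ(N_k) = X_k` for all `k`. -/
def FeasibleAP {α : Type*} [DecidableEq α] {K : ℕ}
    (Npart Xpart : Fin K → Finset α) (μ : α → α) : Prop :=
  ∀ k, (Npart k).image μ = Xpart k

/-- Efficiency under the assignment partition: `μ` is feasible and no feasible
assignment `μ'` weakly improves every division and strictly improves some division. -/
def EfficientAP {α : Type*} [DecidableEq α] {K : ℕ}
    (Npart Xpart : Fin K → Finset α) (pref : α → α → α → Prop) (μ : α → α) : Prop :=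
  FeasibleAP Npart Xpart μ ∧
  ¬ ∃ μ' : α → α, Function.Bijective μ' ∧ FeasibleAP Npart Xpart μ' ∧
      (∀ i, μ' i = μ i ∨ pref i (μ' i) (μ i)) ∧ (∃ j, pref j (μ' j) (μ j))

/-- The list of the elements of `s` in decreasing `r`-priority order. -/
noncomputable def orderList {α : Type*} [DecidableEq α] [Nonempty α]
    (r : α → α → Prop) : ℕ → Finset α → List α
  | 0, _ => []
  | fuel + 1, s =>
    if s.Nonempty then pick r s :: orderList r fuel (s.erase (pick r s)) else []

/-- The Two-Stage Serial Dictatorship (T-SD) mechanism.  Stage 1: divisions,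
processed in exogenous `prio`-order, tentatively nominate their most preferred
not-yet-nominated worker from their group's choice set; the sequence of nominated
workers (as divisions, i.e. owners) is the final order.  Stage 2: divisions are
processed in the final order, and each is assigned its most preferred
not-yet-assigned worker from its group's choice set. -/
noncomputable def tsd {α : Type*} [Fintype α] [DecidableEq α] [Nonempty α] {K : ℕ}
    (Npart Xpart : Fin K → Finset α) (prio : α → α → Prop)
    (pref : α → α → α → Prop) : α → α :=
  let divs := orderList prio (Fintype.card α) Finset.univ
  let noms := divs.foldl
    (fun acc i => acc ++ [pick (pref i) (choiceSet Npart Xpart i \ acc.toFinset)]) []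
  (noms.foldl
    (fun (p : Finset α × (α → α)) j =>
      let w := pick (pref j) (choiceSet Npart Xpart j \ p.1)
      (insert w p.1, Function.update p.2 j w))
    (∅, fun a => a)).2

set_option linter.unusedSectionVars false

section Helpers
variable {α : Type*} [Nonempty α]

lemma exists_rmax {r : α → α → Prop} (hr : IsStrictTotalOrder α r)
    (s : Finset α) : s.Nonempty → ∃ m ∈ s, ∀ x ∈ s, x ≠ m → r m x := by
  classical
  induction s using Finset.induction_on with
  | empty => rintro ⟨x, hx⟩; simp at hx
  | @insert a s ha ih =>
    intro _
    by_cases hs : s.Nonempty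
    · obtain ⟨m, hm, hmax⟩ := ih hs
      have ham : a ≠ m := fun h => ha (h ▸ hm)
      rcases (by haveI := hr; exact trichotomous_of r a m : r a m ∨ a = m ∨ r m a) with h | h | h
      · refine ⟨a, Finset.mem_insert_self a s, ?_⟩
        intro x hx hxa
        rcases Finset.mem_insert.mp hx with rfl | hx
        · exact absurd rfl hxa
        · by_cases hxm : x = m
          · exact hxm ▸ h
          · exact hr.trans a m x h (hmax x hx hxm)
      · exact absurd h ham
      · refine ⟨m, Finset.mem_insert_of_mem hm, ?_⟩
        intro x hx hxm
        rcases Finset.mem_insert.mp hx with rfl | hx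
        · exact h
        · exact hmax x hx hxm
    · rw [Finset.not_nonempty_iff_eq_empty] at hs
      subst hs
      exact ⟨a, Finset.mem_insert_self a ∅, by simp⟩

lemma pick_spec {r : α → α → Prop} (hr : IsStrictTotalOrder α r)
    {s : Finset α} (hs : s.Nonempty) :
    pick r s ∈ s ∧ ∀ x ∈ s, x ≠ pick r s → r (pick r s) x :=
  Classical.epsilon_spec (exists_rmax hr s hs)

variable [DecidableEq α] {K : ℕ} {Npart Xpart : Fin K → Finset α}

lemma choiceSet_eq (hpart : IsAPartition Npart Xpart) {a : α} {k : Fin K}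
    (ha : a ∈ Npart k) : choiceSet Npart Xpart a = Xpart k := by
  classical
  ext x
  simp only [choiceSet, Finset.mem_biUnion, Finset.mem_univ, true_and]
  constructor
  · rintro ⟨k', hk'⟩
    by_cases h : a ∈ Npart k'
    · have : k' = k := (hpart.1 a).unique h ha
      rwa [if_pos h, this] at hk'
    · rw [if_neg h] at hk'; simp at hk'
  · intro hx
    exact ⟨k, by rw [if_pos ha]; exact hx⟩

lemma avail_nonempty (hpart : IsAPartition Npart Xpart) {a : α} {k : Fin K}
    (hak : a ∈ Npart k) {T : Finset α}
    (h : (T ∩ Xpart k).card < (Xpart k).card) :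
    (choiceSet Npart Xpart a \ T).Nonempty := by
  rw [choiceSet_eq hpart hak]
  by_contra h'
  rw [Finset.not_nonempty_iff_eq_empty, Finset.sdiff_eq_empty_iff_subset] at h'
  rw [Finset.inter_eq_right.mpr h'] at h
  exact lt_irrefl _ h


lemma xpart_unique (hpart : IsAPartition Npart Xpart) {w : α} {k k' : Fin K}
    (h : w ∈ Xpart k) (h' : w ∈ Xpart k') : k = k' :=
  (hpart.2.1 w).unique h h'

/-- propagation of the counting invariant when a worker `w ∈ Xpart k` of the
head division `a ∈ Npart k` is removed. -/
lemma count_step (hpart : IsAPartition Npart Xpart) {a : α} {k : Fin K}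
    (hak : a ∈ Npart k) {L' : List α} (haL : a ∉ L') {T : Finset α} {w : α}
    (hwk : w ∈ Xpart k)
    (H : ∀ k', (Npart k' ∩ (a :: L').toFinset).card + (T ∩ Xpart k').card ≤ (Xpart k').card) :
    ∀ k', (Npart k' ∩ L'.toFinset).card + (insert w T ∩ Xpart k').card ≤ (Xpart k').card := by
  intro k'
  by_cases hk : k' = k
  · subst hk
    have h1 : Npart k' ∩ (a :: L').toFinset = insert a (Npart k' ∩ L'.toFinset) := by
      rw [List.toFinset_cons, Finset.inter_comm, Finset.insert_inter_of_mem hak,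
        Finset.inter_comm]
    have h2 : a ∉ Npart k' ∩ L'.toFinset := by
      simp only [Finset.mem_inter, List.mem_toFinset]
      exact fun h => haL h.2
    have h3 : (Npart k' ∩ (a :: L').toFinset).card = (Npart k' ∩ L'.toFinset).card + 1 := by
      rw [h1, Finset.card_insert_of_notMem h2]
    have h4 : insert w T ∩ Xpart k' ⊆ insert w (T ∩ Xpart k') := by
      intro x hx
      rcases Finset.mem_inter.mp hx with ⟨hx1, hx2⟩
      rcases Finset.mem_insert.mp hx1 with rfl | hx1
      · exact Finset.mem_insert_self _ _
      · exact Finset.mem_insert_of_mem (Finset.mem_inter.mpr ⟨hx1, hx2⟩)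
    have h5 : (insert w T ∩ Xpart k').card ≤ (T ∩ Xpart k').card + 1 :=
      le_trans (Finset.card_le_card h4) (Finset.card_insert_le _ _)
    have := H k'
    omega
  · have h1 : Npart k' ∩ L'.toFinset ⊆ Npart k' ∩ (a :: L').toFinset := by
      apply Finset.inter_subset_inter_left
      intro x hx; simp only [List.toFinset_cons, Finset.mem_insert]
      exact Or.inr hx
    have h2 : insert w T ∩ Xpart k' = T ∩ Xpart k' := by
      ext x
      simp only [Finset.mem_inter, Finset.mem_insert]
      constructor
      · rintro ⟨rfl | hx, hx2⟩
        · exact absurd (xpart_unique hpart hx2 hwk) hk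
        · exact ⟨hx, hx2⟩
      · rintro ⟨hx, hx2⟩; exact ⟨Or.inr hx, hx2⟩
    have := H k'
    have := Finset.card_le_card h1
    have h2' : (insert w T ∩ Xpart k').card = (T ∩ Xpart k').card := by rw [h2]
    omega

lemma stage1 (hpart : IsAPartition Npart Xpart) {pref : α → α → α → Prop}
    (hpref : StrictProfile pref) :
    ∀ (L : List α) (acc : List α), L.Nodup → acc.Nodup →
    (∀ k, (Npart k ∩ L.toFinset).card + (acc.toFinset ∩ Xpart k).card ≤ (Xpart k).card) →
    (L.foldl (fun acc i => acc ++ [pick (pref i) (choiceSet Npart Xpart i \ acc.toFinset)]) acc).Nodup ∧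
    (L.foldl (fun acc i => acc ++ [pick (pref i) (choiceSet Npart Xpart i \ acc.toFinset)]) acc).length
      = acc.length + L.length := by
  intro L
  induction L with
  | nil => intro acc _ hacc _; simpa using hacc
  | cons a L' ih =>
    intro acc hL hacc H
    obtain ⟨k, hak, _⟩ := hpart.1 a
    have hcard : (acc.toFinset ∩ Xpart k).card < (Xpart k).card := by
      have h1 : 0 < (Npart k ∩ (a :: L').toFinset).card :=
        Finset.card_pos.mpr ⟨a, Finset.mem_inter.mpr ⟨hak, by simp⟩⟩
      have := H k
      omega
    have hne := avail_nonempty hpart hak hcard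
    have hspec := pick_spec (hpref a) hne
    set w := pick (pref a) (choiceSet Npart Xpart a \ acc.toFinset) with hw
    have hwc : w ∈ choiceSet Npart Xpart a := (Finset.mem_sdiff.mp hspec.1).1
    have hwa : w ∉ acc := by
      have := (Finset.mem_sdiff.mp hspec.1).2
      simpa using this
    have hwk : w ∈ Xpart k := by rwa [choiceSet_eq hpart hak] at hwc
    have hacc' : (acc ++ [w]).Nodup := by
      simp [List.nodup_append, hacc, hwa]
      intro b hb h; exact hwa (h ▸ hb)
    have htf : (acc ++ [w]).toFinset = insert w acc.toFinset := by
      ext x; simp [or_comm]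
    have haL : a ∉ L' := (List.nodup_cons.mp hL).1
    have H' := count_step hpart hak haL hwk H
    rw [← htf] at H'
    have := ih (acc ++ [w]) (List.nodup_cons.mp hL).2 hacc' H'
    simp only [List.foldl_cons, ← hw]
    refine ⟨this.1, ?_⟩
    rw [this.2]
    simp
    omega
end Helpers

section Stage2
variable {α : Type*} [Nonempty α] [DecidableEq α] {K : ℕ} {Npart Xpart : Fin K → Finset α}

lemma stage2 (hpart : IsAPartition Npart Xpart) {pref : α → α → α → Prop}
    (hpref : StrictProfile pref) :
    ∀ (L : List α) (p : Finset α × (α → α)), L.Nodup →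
    (∀ k, (Npart k ∩ L.toFinset).card + (p.1 ∩ Xpart k).card ≤ (Xpart k).card) →
    (∀ j, j ∉ L → (L.foldl
      (fun (p : Finset α × (α → α)) j =>
        let w := pick (pref j) (choiceSet Npart Xpart j \ p.1)
        (insert w p.1, Function.update p.2 j w)) p).2 j = p.2 j) ∧
    (∀ j ∈ L, (L.foldl
      (fun (p : Finset α × (α → α)) j =>
        let w := pick (pref j) (choiceSet Npart Xpart j \ p.1)
        (insert w p.1, Function.update p.2 j w)) p).2 j ∈ choiceSet Npart Xpart j \ p.1) ∧
    (∀ j ∈ L, ∀ j' ∈ L, j ≠ j' → (L.foldl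
      (fun (p : Finset α × (α → α)) j =>
        let w := pick (pref j) (choiceSet Npart Xpart j \ p.1)
        (insert w p.1, Function.update p.2 j w)) p).2 j ≠ (L.foldl
      (fun (p : Finset α × (α → α)) j =>
        let w := pick (pref j) (choiceSet Npart Xpart j \ p.1)
        (insert w p.1, Function.update p.2 j w)) p).2 j') ∧
    (∀ j ∈ L, ∀ x ∈ choiceSet Npart Xpart j, x ∉ p.1 →
      pref j x ((L.foldl
      (fun (p : Finset α × (α → α)) j =>
        let w := pick (pref j) (choiceSet Npart Xpart j \ p.1)
        (insert w p.1, Function.update p.2 j w)) p).2 j) →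
      ∃ j' ∈ L, L.idxOf j' < L.idxOf j ∧ (L.foldl
      (fun (p : Finset α × (α → α)) j =>
        let w := pick (pref j) (choiceSet Npart Xpart j \ p.1)
        (insert w p.1, Function.update p.2 j w)) p).2 j' = x) := by
  intro L
  induction L with
  | nil => intro p _ _; refine ⟨fun j _ => rfl, by simp, by simp, by simp⟩
  | cons a L' ih =>
    intro p hL H
    set step : Finset α × (α → α) → α → Finset α × (α → α) :=
      fun (p : Finset α × (α → α)) j =>
        let w := pick (pref j) (choiceSet Npart Xpart j \ p.1)
        (insert w p.1, Function.update p.2 j w) with hstep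
    obtain ⟨k, hak, _⟩ := hpart.1 a
    have hcard : (p.1 ∩ Xpart k).card < (Xpart k).card := by
      have h1 : 0 < (Npart k ∩ (a :: L').toFinset).card :=
        Finset.card_pos.mpr ⟨a, Finset.mem_inter.mpr ⟨hak, by simp⟩⟩
      have := H k
      omega
    have hne := avail_nonempty hpart hak hcard
    have hspec := pick_spec (hpref a) hne
    set w := pick (pref a) (choiceSet Npart Xpart a \ p.1) with hw
    have hwc : w ∈ choiceSet Npart Xpart a := (Finset.mem_sdiff.mp hspec.1).1
    have hwp : w ∉ p.1 := (Finset.mem_sdiff.mp hspec.1).2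
    have hwk : w ∈ Xpart k := by rwa [choiceSet_eq hpart hak] at hwc
    have haL : a ∉ L' := (List.nodup_cons.mp hL).1
    have hL' : L'.Nodup := (List.nodup_cons.mp hL).2
    set p' : Finset α × (α → α) := (insert w p.1, Function.update p.2 a w) with hp'
    have hfold : (a :: L').foldl step p = L'.foldl step p' := by
      simp only [List.foldl_cons, hstep, hp', hw]
    have H' : ∀ k', (Npart k' ∩ L'.toFinset).card + (p'.1 ∩ Xpart k').card ≤ (Xpart k').card :=
      count_step hpart hak haL hwk H
    obtain ⟨I1, I3, I6, I8⟩ := ih p' hL' H'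
    set q := L'.foldl step p' with hq
    have hqa : q.2 a = w := by
      rw [I1 a haL]
      simp [hp']
    rw [hfold]
    refine ⟨?_, ?_, ?_, ?_⟩
    · -- C1
      intro j hj
      have hja : j ≠ a := fun h => hj (h ▸ (List.mem_cons_self : a ∈ a :: L'))
      have hjL : j ∉ L' := fun h => hj (List.mem_cons_of_mem a h)
      rw [I1 j hjL]
      simp [hp', Function.update_of_ne hja]
    · -- C3
      intro j hj
      rcases List.mem_cons.mp hj with rfl | hj
      · rw [hqa]; exact hspec.1
      · have := I3 j hj
        rw [Finset.mem_sdiff] at this ⊢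
        refine ⟨this.1, fun hx => this.2 ?_⟩
        simp only [hp', Finset.mem_insert]
        exact Or.inr hx
    · -- C6
      have key : ∀ j ∈ L', q.2 a ≠ q.2 j := by
        intro j hj
        rw [hqa]
        have h2 := (Finset.mem_sdiff.mp (I3 j hj)).2
        intro hcontra
        apply h2
        rw [← hcontra]
        exact Finset.mem_insert_self w p.1
      intro j hj j' hj' hne'
      rcases List.mem_cons.mp hj with h1 | h1
      · rcases List.mem_cons.mp hj' with h2 | h2
        · exact absurd (h1.trans h2.symm) hne'
        · exact h1 ▸ key j' h2
      · rcases List.mem_cons.mp hj' with h2 | h2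
        · exact h2 ▸ (key j h1).symm
        · exact I6 j h1 j' h2 hne'
    · -- C8
      intro j hj x hxc hxp hpx
      haveI : IsStrictTotalOrder α (pref j) := hpref j
      rcases List.mem_cons.mp hj with h1 | hjm
      · exfalso
        subst h1
        rw [hqa] at hpx
        by_cases hxw : x = w
        · rw [hxw] at hpx; exact irrefl_of (pref j) w hpx
        · have := hspec.2 x (Finset.mem_sdiff.mpr ⟨hxc, hxp⟩) hxw
          exact irrefl_of (pref j) x (_root_.trans_of (pref j) hpx this)
      · have hj := hjm
        have hja : j ≠ a := fun h => haL (h ▸ hj)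
        by_cases hxw : x = w
        · refine ⟨a, (List.mem_cons_self : a ∈ a :: L'), ?_, by rw [hqa, hxw]⟩
          rw [List.idxOf_cons_self, List.idxOf_cons_ne _ (Ne.symm hja)]
          exact Nat.succ_pos _
        · have hxp' : x ∉ p'.1 := by
            simp only [hp', Finset.mem_insert]
            rintro (rfl | h)
            · exact hxw rfl
            · exact hxp h
          obtain ⟨j', hj'L, hidx, hj'x⟩ := I8 j hj x hxc hxp' hpx
          have hj'a : j' ≠ a := fun h => haL (h ▸ hj'L)
          refine ⟨j', List.mem_cons_of_mem a hj'L, ?_, hj'x⟩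
          rw [List.idxOf_cons_ne _ (Ne.symm hj'a), List.idxOf_cons_ne _ (Ne.symm hja)]
          exact Nat.succ_lt_succ hidx
end Stage2
section OrderList
variable {α : Type*} [Nonempty α] [DecidableEq α]

lemma orderList_spec {r : α → α → Prop} (hr : IsStrictTotalOrder α r) :
    ∀ (fuel : ℕ) (s : Finset α), s.card ≤ fuel →
    (orderList r fuel s).Nodup ∧ (orderList r fuel s).toFinset = s := by
  intro fuel
  induction fuel with
  | zero =>
    intro s hs
    have : s = ∅ := Finset.card_eq_zero.mp (Nat.le_zero.mp hs)
    subst this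
    simp [orderList]
  | succ n ih =>
    intro s hs
    by_cases h : s.Nonempty
    · rw [orderList, if_pos h]
      have hmem : pick r s ∈ s := (pick_spec hr h).1
      have hcard : (s.erase (pick r s)).card ≤ n := by
        rw [Finset.card_erase_of_mem hmem]
        omega
      obtain ⟨h1, h2⟩ := ih (s.erase (pick r s)) hcard
      constructor
      · rw [List.nodup_cons]
        refine ⟨?_, h1⟩
        intro hcontra
        rw [← List.mem_toFinset, h2] at hcontra
        exact (Finset.notMem_erase _ _) hcontra
      · rw [List.toFinset_cons, h2, Finset.insert_erase hmem]
    · rw [orderList, if_neg h]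
      rw [Finset.not_nonempty_iff_eq_empty] at h
      subst h
      simp
end OrderList

/-- The assignment produced by Two-Stage Serial Dictatorship is an assignment that
is feasible under the assignment partition and efficient under the assignment
partition. -/
theorem tsd_efficient_under_partition {α : Type*} [Fintype α] [DecidableEq α]
    [Nonempty α] {K : ℕ} (Npart Xpart : Fin K → Finset α)
    (hpart : IsAPartition Npart Xpart)
    (prio : α → α → Prop) (hprio : IsStrictTotalOrder α prio)
    (pref : α → α → α → Prop) (hpref : StrictProfile pref) :
    Function.Bijective (tsd Npart Xpart prio pref) ∧
    FeasibleAP Npart Xpart (tsd Npart Xpart prio pref) ∧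
    EfficientAP Npart Xpart pref (tsd Npart Xpart prio pref) := by
  classical
  set divs := orderList prio (Fintype.card α) (Finset.univ : Finset α) with hdivs
  have hdiv := orderList_spec hprio (Fintype.card α) Finset.univ (by simp)
  rw [← hdivs] at hdiv
  set noms := divs.foldl
    (fun acc i => acc ++ [pick (pref i) (choiceSet Npart Xpart i \ acc.toFinset)]) []
    with hnoms
  have Hinit : ∀ k, (Npart k ∩ divs.toFinset).card
      + (([] : List α).toFinset ∩ Xpart k).card ≤ (Xpart k).card := by
    intro k
    rw [hdiv.2]
    simp only [Finset.inter_univ, List.toFinset_nil, Finset.empty_inter, Finset.card_empty,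
      add_zero]
    exact le_of_eq (hpart.2.2.2 k)
  have hst1 := stage1 hpart hpref divs [] hdiv.1 List.nodup_nil Hinit
  rw [← hnoms] at hst1
  have hnomsN : noms.Nodup := hst1.1
  have hdlen : divs.length = Fintype.card α := by
    rw [← List.toFinset_card_of_nodup hdiv.1, hdiv.2, Finset.card_univ]
  have hlen : noms.length = Fintype.card α := by
    have := hst1.2
    simpa [hdlen] using this
  have hnomsU : noms.toFinset = Finset.univ :=
    Finset.eq_univ_of_card _ (by rw [List.toFinset_card_of_nodup hnomsN, hlen])
  have hmem : ∀ j : α, j ∈ noms := fun j => by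
    rw [← List.mem_toFinset, hnomsU]; exact Finset.mem_univ j
  have H2 : ∀ k, (Npart k ∩ noms.toFinset).card
      + (((∅ : Finset α), fun a : α => a).1 ∩ Xpart k).card ≤ (Xpart k).card := by
    intro k
    rw [hnomsU]
    simp only [Finset.inter_univ, Finset.empty_inter, Finset.card_empty, add_zero]
    exact le_of_eq (hpart.2.2.2 k)
  obtain ⟨C1, C3, C6, C8⟩ :=
    stage2 hpart hpref noms ((∅ : Finset α), fun a : α => a) hnomsN H2
  have hμeq : tsd Npart Xpart prio pref = (noms.foldl
      (fun (p : Finset α × (α → α)) j =>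
        let w := pick (pref j) (choiceSet Npart Xpart j \ p.1)
        (insert w p.1, Function.update p.2 j w))
      ((∅ : Finset α), fun a : α => a)).2 := by
    rw [hnoms, hdivs]
    rfl
  rw [← hμeq] at C1 C3 C6 C8
  set μ := tsd Npart Xpart prio pref with hμ
  have hinj : Function.Injective μ := by
    intro x y hxy
    by_contra hne
    exact C6 x (hmem x) y (hmem y) hne hxy
  have hbij : Function.Bijective μ := Finite.injective_iff_bijective.mp hinj
  have hfeas : FeasibleAP Npart Xpart μ := by
    intro k
    have hsub : (Npart k).image μ ⊆ Xpart k := by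
      intro x hx
      obtain ⟨j, hj, rfl⟩ := Finset.mem_image.mp hx
      have := (Finset.mem_sdiff.mp (C3 j (hmem j))).1
      rwa [choiceSet_eq hpart hj] at this
    have hcard : ((Npart k).image μ).card = (Xpart k).card := by
      rw [Finset.card_image_of_injective _ hinj, hpart.2.2.2 k]
    exact Finset.eq_of_subset_of_card_le hsub (le_of_eq hcard.symm)
  refine ⟨hbij, hfeas, hfeas, ?_⟩
  rintro ⟨μ', hbij', hfeas', hweak, j₀, hstrict⟩
  set D : Finset α := Finset.univ.filter (fun j => μ' j ≠ μ j) with hD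
  have hDne : D.Nonempty := by
    refine ⟨j₀, Finset.mem_filter.mpr ⟨Finset.mem_univ _, ?_⟩⟩
    intro h
    rw [h] at hstrict
    haveI : IsStrictTotalOrder α (pref j₀) := hpref j₀
    exact irrefl_of (pref j₀) _ hstrict
  obtain ⟨j, hjD, hjmin⟩ := Finset.exists_min_image D (fun j => noms.idxOf j) hDne
  have hjne : μ' j ≠ μ j := (Finset.mem_filter.mp hjD).2
  have hjpref : pref j (μ' j) (μ j) := (hweak j).resolve_left hjne
  obtain ⟨k, hjk, _⟩ := hpart.1 j
  have hx : μ' j ∈ choiceSet Npart Xpart j := by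
    rw [choiceSet_eq hpart hjk, ← hfeas' k]
    exact Finset.mem_image_of_mem μ' hjk
  obtain ⟨j', hj'mem, hidx, hj'x⟩ :=
    C8 j (hmem j) (μ' j) hx (Finset.notMem_empty _) hjpref
  have hj'ne : j' ∉ D := fun h => absurd hidx (not_lt.mpr (hjmin j' h))
  have heq1 : μ' j' = μ j' := by
    by_contra h
    exact hj'ne (Finset.mem_filter.mpr ⟨Finset.mem_univ _, h⟩)
  have heq2 : μ' j' = μ' j := by rw [heq1, hj'x]
  have heq3 : j' = j := hbij'.1 heq2
  rw [heq3] at hidx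
  exact lt_irrefl _ hidx
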